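/- arXiv:2308.02860 — 3 statements merged into one kernel-verified Lean document; each statement's English description precedes it below -/
import Mathlib

section
/- For every finite nonempty set S with scores s : S → ℝ, the Plackett–Luce probabilities form a probability distribution over arrangements: the sum over all permutations π of S of P_s(π) = ∏_{i=1}^{n} exp(s(π_i)) / (∑_{j=i}^{n} exp(s(π_j))) equals 1, where n = |S|. -/
/-- Plackett–Luce probability of an arrangement given as a list:
`P_s(π) = ∏_i exp (s π_i) / ∑_{j ≥ i} exp (s π_j)`. -/
noncomputable def plProb {α : Type*} (s : α → ℝ) : List α → ℝ
  | [] => 1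
  | d :: t => Real.exp (s d) / (((d :: t).map fun k => Real.exp (s k)).sum) * plProb s t

/-- Probability of an event `E` under the Plackett–Luce distribution over the
arrangements of the finite set `S`. -/
noncomputable def plPr {α : Type*} [DecidableEq α] (s : α → ℝ) (S : Finset α)
    (E : Set (List α)) : ℝ :=
  ∑ l ∈ S.toList.permutations.toFinset, E.indicator (plProb s) l

lemma erase_toList_perm {α : Type*} [DecidableEq α] (S : Finset α) (d : α) :
    (S.erase d).toList.Perm (S.toList.erase d) := by
  rw [← Multiset.coe_eq_coe, Finset.coe_toList, ← Multiset.coe_erase, Finset.coe_toList,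
    Finset.erase_val]

lemma perm_map_sum {α : Type*} [DecidableEq α] {S : Finset α} {l : List α}
    (h : l.Perm S.toList) (f : α → ℝ) : (l.map f).sum = ∑ k ∈ S, f k := by
  rw [(h.map f).sum_eq]
  rw [Finset.sum, ← Finset.coe_toList S, Multiset.map_coe, Multiset.sum_coe]

theorem pl_key {α : Type*} [DecidableEq α] (s : α → ℝ) (S : Finset α) :
    ∑ l ∈ S.toList.permutations.toFinset, plProb s l = 1 := by
  induction S using Finset.strongInduction with
  | _ S ih =>
  rcases S.eq_empty_or_nonempty with rfl | hS
  · simp [plProb]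
  · have hbi : S.toList.permutations.toFinset =
        S.biUnion (fun d => ((S.erase d).toList.permutations.toFinset).image (d :: ·)) := by
      ext l
      simp only [List.mem_toFinset, List.mem_permutations, Finset.mem_biUnion,
        Finset.mem_image]
      constructor
      · intro hl
        match l, hl with
        | [], hl =>
          exfalso
          have := hl.length_eq
          simp [Finset.length_toList] at this
          exact hS.ne_empty (Finset.card_eq_zero.mp this.symm)
        | d :: t, hl =>
          refine ⟨d, ?_, t, ?_, rfl⟩
          · exact Finset.mem_toList.mp (hl.mem_iff.mp (List.mem_cons_self : d ∈ d :: t))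
          · have : t.Perm (S.toList.erase d) := by
              have := hl.erase d
              simpa using this
            exact this.trans (erase_toList_perm S d).symm
      · rintro ⟨d, hd, t, ht, rfl⟩
        have hd' : d ∈ S.toList := Finset.mem_toList.mpr hd
        exact ((ht.trans (erase_toList_perm S d)).cons d).trans
          (List.perm_cons_erase hd').symm
    have hdisj : ∀ d ∈ S, ∀ e ∈ S, d ≠ e → Disjoint
        (((S.erase d).toList.permutations.toFinset).image (d :: ·))
        (((S.erase e).toList.permutations.toFinset).image (e :: ·)) := by
      intro d _ e _ hde
      simp only [Finset.disjoint_left, Finset.mem_image]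
      rintro l ⟨t, _, rfl⟩ ⟨t', _, h⟩
      exact hde ((List.cons.injEq ..).mp h).1.symm
    rw [hbi, Finset.sum_biUnion hdisj]
    have hT : (0:ℝ) < ∑ k ∈ S, Real.exp (s k) :=
      Finset.sum_pos (fun k _ => Real.exp_pos _) hS
    have step : ∀ d ∈ S,
        (∑ l ∈ ((S.erase d).toList.permutations.toFinset).image (d :: ·), plProb s l)
          = Real.exp (s d) / (∑ k ∈ S, Real.exp (s k)) := by
      intro d hd
      rw [Finset.sum_image (by intro a _ b _ h; exact ((List.cons.injEq ..).mp h).2)]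
      have : ∀ t ∈ (S.erase d).toList.permutations.toFinset,
          plProb s (d :: t) = Real.exp (s d) / (∑ k ∈ S, Real.exp (s k)) * plProb s t := by
        intro t ht
        have htp : t.Perm (S.erase d).toList := by
          simpa using List.mem_toFinset.mp ht
        have hperm : (d :: t).Perm S.toList := by
          have hd' : d ∈ S.toList := Finset.mem_toList.mpr hd
          exact ((htp.trans (erase_toList_perm S d)).cons d).trans
            (List.perm_cons_erase hd').symm
        rw [plProb, perm_map_sum hperm]
      rw [Finset.sum_congr rfl this, ← Finset.mul_sum,
        ih (S.erase d) (Finset.erase_ssubset hd), mul_one]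
    rw [Finset.sum_congr rfl step, ← Finset.sum_div, div_self hT.ne']

/-- The Plackett–Luce probabilities form a probability distribution over the
arrangements of a finite nonempty set `S`: summing `P_s(π)` over all
permutations `π` of `S` gives `1`. -/
theorem pl_sum_eq_one {α : Type*} [DecidableEq α] (S : Finset α) (hS : S.Nonempty)
    (s : α → ℝ) :
    ∑ l ∈ S.toList.permutations.toFinset, plProb s l = 1 :=
  pl_key s S
end

section
/- Let Π = (Π_1, …, Π_n) be a random arrangement of a finite set S distributed according to the Plackett–Luce distribution with scores s, and let p = (d_1, …, d_k) be a list of distinct elements of S with positive probability of being the first k entries of Π. Then, conditionally on (Π_1, …, Π_k) = p, the remaining sequence (Π_{k+1}, …, Π_n) is distributed according to the Plackett–Luce distribution on the set S ∖ {d_1, …, d_k} with scores given by the restriction of s. -/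
/-- Prefix factor. -/
noncomputable def plK {α : Type*} (s : α → ℝ) : List α → List α → ℝ
  | [], _ => 1
  | d :: t, r => Real.exp (s d) / (((d :: (t ++ r)).map fun k => Real.exp (s k)).sum) * plK s t r

lemma sum_map_exp_pos {α : Type*} (s : α → ℝ) (l : List α) (hl : l ≠ []) :
    0 < ((l.map fun k => Real.exp (s k)).sum) := by
  apply List.sum_pos
  · intro x hx
    simp only [List.mem_map] at hx
    obtain ⟨a, -, rfl⟩ := hx
    exact Real.exp_pos _
  · simpa using hl

lemma plProb_append {α : Type*} (s : α → ℝ) (p r : List α) :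
    plProb s (p ++ r) = plK s p r * plProb s r := by
  induction p with
  | nil => simp [plK]
  | cons d t ih =>
    simp only [List.cons_append, plProb, plK, ih, List.append_eq]
    ring

lemma plK_perm {α : Type*} (s : α → ℝ) (p : List α) {r r' : List α} (h : r.Perm r') :
    plK s p r = plK s p r' := by
  induction p with
  | nil => rfl
  | cons d t ih =>
    simp only [plK, ih]
    congr 2
    exact List.Perm.sum_eq ((((h.append_left t).cons d)).map _)

lemma plK_pos {α : Type*} (s : α → ℝ) (p r : List α) : 0 < plK s p r := by
  induction p with
  | nil => exact one_pos
  | cons d t ih =>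
    exact mul_pos (div_pos (Real.exp_pos _) (sum_map_exp_pos s _ (by simp))) ih

lemma plProb_pos {α : Type*} (s : α → ℝ) (l : List α) : 0 < plProb s l := by
  induction l with
  | nil => exact one_pos
  | cons d t ih =>
    exact mul_pos (div_pos (Real.exp_pos _) (sum_map_exp_pos s _ (by simp))) ih

lemma sum_plProb_perms_aux {α : Type*} [DecidableEq α] (s : α → ℝ) :
    ∀ (n : ℕ) (q : List α), q.length = n → q.Nodup →
      ∑ r ∈ q.permutations.toFinset, plProb s r = 1 := by
  intro n
  induction n using Nat.strong_induction_on with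
  | _ n ih =>
    intro q hlen hq
    match q with
    | [] => simp [List.permutations, plProb]
    | d₀ :: q₀ =>
      set q := d₀ :: q₀ with hqdef
      have hqne : q ≠ [] := by simp [hqdef]
      have hdecomp : q.permutations.toFinset =
          q.toFinset.biUnion (fun d =>
            ((q.erase d).permutations.toFinset).image (d :: ·)) := by
        ext r
        simp only [List.mem_toFinset, List.mem_permutations, Finset.mem_biUnion,
          Finset.mem_image]
        constructor
        · intro hr
          have hrne : r ≠ [] := by
            intro h; subst h
            exact hqne (hr.symm.eq_nil)
          match r with
          | d :: t =>
            have hd : d ∈ q := hr.mem_iff.mp (by simp)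
            refine ⟨d, hd, t, ?_, rfl⟩
            have h1 : (d :: t).Perm (d :: q.erase d) :=
              hr.trans (List.perm_cons_erase hd)
            exact (List.perm_cons d).mp h1
        · rintro ⟨d, hd, t, ht, rfl⟩
          exact (ht.cons d).trans (List.perm_cons_erase hd).symm
      rw [hdecomp, Finset.sum_biUnion]
      · have hT : 0 < ((q.map fun k => Real.exp (s k)).sum) := sum_map_exp_pos s q hqne
        have hstep : ∀ d ∈ q.toFinset,
            (∑ r ∈ ((q.erase d).permutations.toFinset).image (d :: ·), plProb s r)
              = Real.exp (s d) / ((q.map fun k => Real.exp (s k)).sum) := by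
          intro d hd
          rw [List.mem_toFinset] at hd
          rw [Finset.sum_image (by intro a _ b _ h; simpa using h)]
          have hinner : ∀ t ∈ (q.erase d).permutations.toFinset,
              plProb s (d :: t)
                = Real.exp (s d) / ((q.map fun k => Real.exp (s k)).sum) * plProb s t := by
            intro t ht
            rw [List.mem_toFinset, List.mem_permutations] at ht
            have hperm : (d :: t).Perm q := (ht.cons d).trans (List.perm_cons_erase hd).symm
            simp only [plProb]
            rw [List.Perm.sum_eq (hperm.map _)]
          rw [Finset.sum_congr rfl hinner, ← Finset.mul_sum]
          have hlt : (q.erase d).length < n := by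
            rw [← hlen, List.length_erase_of_mem hd]
            exact Nat.sub_lt (List.length_pos_iff.mpr hqne) one_pos
          rw [ih _ hlt (q.erase d) rfl (hq.erase d), mul_one]
        rw [Finset.sum_congr rfl hstep]
        rw [← Finset.sum_div, List.sum_toFinset _ hq]
        exact div_self (ne_of_gt hT)
      · intro d hd e he hde
        simp only [Function.onFun, Finset.disjoint_left, Finset.mem_image]
        rintro r ⟨t, -, rfl⟩ ⟨u, -, hu⟩
        exact hde (by simpa using (List.cons.injEq .. ▸ hu).1.symm ▸ rfl)

/-- Conditional on the first `k` entries of a Plackett–Luce arrangement of `S`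
being a fixed list `p` of distinct elements of `S` (an event of positive
probability), the remaining sequence is distributed according to the
Plackett–Luce distribution on `S \ p` with the restricted scores. -/
theorem pl_cond_suffix {α : Type*} [DecidableEq α] (S : Finset α) (s : α → ℝ)
    (p : List α) (hp : p.Nodup) (hpS : ∀ x ∈ p, x ∈ S)
    (hpos : 0 < plPr s S {l | l.take p.length = p})
    (q : List α) (hq : q.Nodup) (hqS : q.toFinset = S \ p.toFinset) :
    plPr s S {l | l = p ++ q} / plPr s S {l | l.take p.length = p}
      = plProb s q := by
  -- p ++ q is a permutation of S.toList
  have hdisj : ∀ x ∈ p, x ∉ q := by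
    intro x hx hxq
    have : x ∈ q.toFinset := List.mem_toFinset.mpr hxq
    rw [hqS, Finset.mem_sdiff] at this
    exact this.2 (List.mem_toFinset.mpr hx)
  have hpq_nodup : (p ++ q).Nodup := List.Nodup.append hp hq (by
    intro x hx hxq; exact hdisj x hx hxq)
  have hpq_toFinset : (p ++ q).toFinset = S := by
    rw [List.toFinset_append, hqS, Finset.union_sdiff_of_subset]
    intro x hx
    rw [List.mem_toFinset] at hx
    exact hpS x hx
  have hperm : (p ++ q).Perm S.toList :=
    List.perm_of_nodup_nodup_toFinset_eq hpq_nodup S.nodup_toList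
      (by rw [hpq_toFinset, Finset.toList_toFinset])
  -- numerator
  have hnum : plPr s S {l | l = p ++ q} = plK s p q * plProb s q := by
    unfold plPr
    have : ∀ l ∈ S.toList.permutations.toFinset,
        Set.indicator {l | l = p ++ q} (plProb s) l
          = if l = p ++ q then plProb s l else 0 := by
      intro l _
      simp [Set.indicator_apply]
    rw [Finset.sum_congr rfl this, Finset.sum_ite_eq' _ (p ++ q)]
    rw [if_pos (by rw [List.mem_toFinset, List.mem_permutations]; exact hperm)]
    exact plProb_append s p q
  -- denominator
  have hden : plPr s S {l | l.take p.length = p} = plK s p q := by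
    unfold plPr
    have h1 : ∀ l ∈ S.toList.permutations.toFinset,
        Set.indicator {l | l.take p.length = p} (plProb s) l
          = if l.take p.length = p then plProb s l else 0 := by
      intro l _
      simp [Set.indicator_apply]
    rw [Finset.sum_congr rfl h1, ← Finset.sum_filter]
    have h2 : S.toList.permutations.toFinset.filter (fun l => l.take p.length = p)
        = (q.permutations.toFinset).image (p ++ ·) := by
      ext l
      simp only [Finset.mem_filter, List.mem_toFinset, List.mem_permutations,
        Finset.mem_image]
      constructor
      · rintro ⟨hl, htake⟩
        have hl2 : l = p ++ l.drop p.length := by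
          conv_lhs => rw [← List.take_append_drop p.length l]
          rw [htake]
        refine ⟨l.drop p.length, ?_, hl2.symm⟩
        have h3 : (p ++ l.drop p.length).Perm (p ++ q) := by
          rw [← hl2]
          exact hl.trans hperm.symm
        exact (List.perm_append_left_iff p).mp h3
      · rintro ⟨r, hr, rfl⟩
        exact ⟨((hr.append_left p).trans hperm), List.take_left⟩
    rw [h2, Finset.sum_image (by intro a _ b _ h; exact List.append_cancel_left h)]
    have h4 : ∀ r ∈ q.permutations.toFinset,
        plProb s (p ++ r) = plK s p q * plProb s r := by
      intro r hr
      rw [List.mem_toFinset, List.mem_permutations] at hr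
      rw [plProb_append, plK_perm s p hr]
    rw [Finset.sum_congr rfl h4, ← Finset.mul_sum,
      sum_plProb_perms_aux s q.length q rfl hq, mul_one]
  rw [hnum, hden]
  exact mul_div_cancel_left₀ _ (ne_of_gt (plK_pos s p q))
end

section
/- Let Π be a random arrangement of a finite set S distributed according to the Plackett–Luce distribution with scores s, let a, b ∈ S be distinct, and let p = (d_1, …, d_k) be a list of distinct elements of S ∖ {a, b} with positive probability of being the first k entries of Π. Then the conditional probability, given (Π_1, …, Π_k) = p, that a appears before b in Π equals exp(s(a)) / (exp(s(a)) + exp(s(b))); in particular, the relative order of a and b is independent of how the first k positions are arranged. -/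
section Aux

variable {α : Type*} [DecidableEq α]

lemma list_map_sum_toList (f : α → ℝ) (T : Finset α) :
    (T.toList.map f).sum = ∑ x ∈ T, f x := by
  rw [Finset.sum_eq_multiset_sum, ← Finset.coe_toList T, Multiset.map_coe, Multiset.sum_coe]

lemma list_map_sum_perm (f : α → ℝ) {l : List α} {T : Finset α} (h : l.Perm T.toList) :
    (l.map f).sum = ∑ x ∈ T, f x := by
  rw [List.Perm.sum_eq (h.map f), list_map_sum_toList]

/-- The finset of arrangements of `T`. -/
noncomputable def permsOf (T : Finset α) : Finset (List α) := T.toList.permutations.toFinset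

lemma mem_permsOf {T : Finset α} {l : List α} : l ∈ permsOf T ↔ l.Perm T.toList := by
  simp [permsOf, List.mem_permutations]

lemma plPr_eq (s : α → ℝ) (S : Finset α) (E : Set (List α)) :
    plPr s S E = ∑ l ∈ permsOf S, E.indicator (plProb s) l := rfl

lemma erase_toList_perm_s6 (T : Finset α) (c : α) :
    ((T.toList).erase c).Perm (T.erase c).toList := by
  apply List.perm_of_nodup_nodup_toFinset_eq (T.nodup_toList.erase c) (Finset.nodup_toList _)
  ext x
  simp [List.Nodup.mem_erase_iff T.nodup_toList, Finset.mem_erase, and_comm]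

lemma permsOf_decomp (T : Finset α) (hT : T.Nonempty) :
    permsOf T = T.biUnion (fun c => (permsOf (T.erase c)).image (c :: ·)) := by
  ext l
  simp only [Finset.mem_biUnion, Finset.mem_image, mem_permsOf]
  constructor
  · intro hl
    have hne : l ≠ [] := by
      intro h
      subst h
      have := hl.symm.eq_nil
      simp [Finset.toList_eq_nil] at this
      exact hT.ne_empty this
    obtain ⟨c, q, rfl⟩ := List.exists_cons_of_ne_nil hne
    rw [List.cons_perm_iff_perm_erase] at hl
    refine ⟨c, ?_, q, ?_, rfl⟩
    · rw [← Finset.mem_toList]; exact hl.1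
    · exact hl.2.trans (erase_toList_perm_s6 T c)
  · rintro ⟨c, hc, q, hq, rfl⟩
    rw [List.cons_perm_iff_perm_erase]
    exact ⟨Finset.mem_toList.2 hc, hq.trans (erase_toList_perm_s6 T c).symm⟩

lemma sum_permsOf (T : Finset α) (hT : T.Nonempty) (f : List α → ℝ) :
    ∑ l ∈ permsOf T, f l = ∑ c ∈ T, ∑ q ∈ permsOf (T.erase c), f (c :: q) := by
  rw [permsOf_decomp T hT, Finset.sum_biUnion, Finset.sum_congr rfl]
  · intro c _
    rw [Finset.sum_image]
    intro x _ y _ h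
    exact (List.cons.injEq _ _ _ _ ▸ h).2
  · intro c hc c' hc' hne
    apply Finset.disjoint_left.2
    rintro l hl hl'
    simp only [Finset.mem_image] at hl hl'
    obtain ⟨q, _, rfl⟩ := hl
    obtain ⟨q', _, h⟩ := hl'
    exact hne (by injection h; simp_all)

lemma sumExp_pos (s : α → ℝ) (T : Finset α) (hT : T.Nonempty) :
    0 < ∑ x ∈ T, Real.exp (s x) :=
  Finset.sum_pos (fun _ _ => Real.exp_pos _) hT

lemma sum_plProb (s : α → ℝ) (T : Finset α) :
    ∑ l ∈ permsOf T, plProb s l = 1 := by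
  induction T using Finset.strongInduction with
  | _ T ih =>
    rcases T.eq_empty_or_nonempty with rfl | hT
    · simp [permsOf, plProb]
    · rw [sum_permsOf T hT]
      have hW : (0:ℝ) < ∑ x ∈ T, Real.exp (s x) := sumExp_pos s T hT
      have : ∀ c ∈ T, ∑ q ∈ permsOf (T.erase c), plProb s (c :: q)
          = Real.exp (s c) / (∑ x ∈ T, Real.exp (s x)) := by
        intro c hc
        have : ∀ q ∈ permsOf (T.erase c), plProb s (c :: q)
            = Real.exp (s c) / (∑ x ∈ T, Real.exp (s x)) * plProb s q := by
          intro q hq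
          have hperm : (c :: q).Perm T.toList := by
            rw [List.cons_perm_iff_perm_erase]
            exact ⟨Finset.mem_toList.2 hc, (mem_permsOf.1 hq).trans (erase_toList_perm_s6 T c).symm⟩
          show Real.exp (s c) / (((c :: q).map fun k => Real.exp (s k)).sum) * plProb s q = _
          rw [list_map_sum_perm _ hperm]
        rw [Finset.sum_congr rfl this, ← Finset.mul_sum, ih (T.erase c) (Finset.erase_ssubset hc),
          mul_one]
      rw [Finset.sum_congr rfl this, ← Finset.sum_div, div_self hW.ne']

lemma sum_plProb_before (s : α → ℝ) (T : Finset α) {a b : α}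
    (ha : a ∈ T) (hb : b ∈ T) (hab : a ≠ b) :
    ∑ l ∈ permsOf T, (if l.idxOf a < l.idxOf b then plProb s l else 0)
      = Real.exp (s a) / (Real.exp (s a) + Real.exp (s b)) := by
  induction T using Finset.strongInduction with
  | _ T ih =>
    have hT : T.Nonempty := ⟨a, ha⟩
    set W : ℝ := ∑ x ∈ T, Real.exp (s x) with hWdef
    have hW : (0:ℝ) < W := sumExp_pos s T hT
    set r : ℝ := Real.exp (s a) / (Real.exp (s a) + Real.exp (s b)) with hrdef
    have hplcons : ∀ c ∈ T, ∀ q ∈ permsOf (T.erase c),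
        plProb s (c :: q) = Real.exp (s c) / W * plProb s q := by
      intro c hc q hq
      have hperm : (c :: q).Perm T.toList := by
        rw [List.cons_perm_iff_perm_erase]
        exact ⟨Finset.mem_toList.2 hc, (mem_permsOf.1 hq).trans (erase_toList_perm_s6 T c).symm⟩
      show Real.exp (s c) / (((c :: q).map fun k => Real.exp (s k)).sum) * plProb s q = _
      rw [list_map_sum_perm _ hperm]
    have key : ∀ c ∈ T, ∑ q ∈ permsOf (T.erase c),
        (if (c :: q).idxOf a < (c :: q).idxOf b then plProb s (c :: q) else 0)
        = if c = a then Real.exp (s a) / W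
          else if c = b then 0 else Real.exp (s c) / W * r := by
      intro c hc
      by_cases hca : c = a
      · subst hca
        rw [if_pos rfl]
        have h1 : ∀ q ∈ permsOf (T.erase c),
            (if (c :: q).idxOf c < (c :: q).idxOf b then plProb s (c :: q) else 0)
            = Real.exp (s c) / W * plProb s q := by
          intro q hq
          rw [if_pos, hplcons c hc q hq]
          rw [List.idxOf_cons_self, List.idxOf_cons_ne _ hab]
          exact Nat.succ_pos _
        rw [Finset.sum_congr rfl h1, ← Finset.mul_sum, sum_plProb, mul_one]
      · rw [if_neg hca]
        by_cases hcb : c = b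
        · subst hcb
          rw [if_pos rfl]
          apply Finset.sum_eq_zero
          intro q hq
          rw [if_neg]
          rw [List.idxOf_cons_self, List.idxOf_cons_ne _ hca]
          omega
        · rw [if_neg hcb]
          have h2 : ∀ q ∈ permsOf (T.erase c),
              (if (c :: q).idxOf a < (c :: q).idxOf b then plProb s (c :: q) else 0)
              = Real.exp (s c) / W * (if q.idxOf a < q.idxOf b then plProb s q else 0) := by
            intro q hq
            rw [List.idxOf_cons_ne _ hca, List.idxOf_cons_ne _ hcb]
            by_cases h : q.idxOf a < q.idxOf b
            · rw [if_pos (by omega), if_pos h, hplcons c hc q hq]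
            · rw [if_neg (by omega), if_neg h, mul_zero]
          rw [Finset.sum_congr rfl h2, ← Finset.mul_sum,
            ih (T.erase c) (Finset.erase_ssubset hc)
              (Finset.mem_erase.2 ⟨Ne.symm hca, ha⟩)
              (Finset.mem_erase.2 ⟨Ne.symm hcb, hb⟩)]
    rw [sum_permsOf T hT, Finset.sum_congr rfl key]
    -- now a pure algebraic computation
    have hEab : (0:ℝ) < Real.exp (s a) + Real.exp (s b) := by positivity
    have hsum1 : ∑ c ∈ T, Real.exp (s c) / W = 1 := by
      rw [← Finset.sum_div, ← hWdef, div_self hW.ne']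
    have hsplit : ∀ c ∈ T,
        (if c = a then Real.exp (s a) / W else if c = b then 0 else Real.exp (s c) / W * r)
        = Real.exp (s c) / W * r
          + (if c = a then Real.exp (s a) / W * (1 - r) else if c = b then
              -(Real.exp (s b) / W * r) else 0) := by
      intro c _
      by_cases hca : c = a
      · subst hca; simp; ring
      · rw [if_neg hca, if_neg hca]
        by_cases hcb : c = b
        · subst hcb; simp
        · rw [if_neg hcb, if_neg hcb]; ring
    rw [Finset.sum_congr rfl hsplit, Finset.sum_add_distrib, ← Finset.sum_mul, hsum1, one_mul]
    have hrest : ∑ c ∈ T, (if c = a then Real.exp (s a) / W * (1 - r) else if c = b then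
        -(Real.exp (s b) / W * r) else 0) = 0 := by
      have hsub : ({a, b} : Finset α) ⊆ T := by
        intro x hx
        rcases Finset.mem_insert.1 hx with rfl | hx
        · exact ha
        · rw [Finset.mem_singleton] at hx; subst hx; exact hb
      rw [← Finset.sum_subset hsub]
      · rw [Finset.sum_pair hab, if_pos rfl,
          if_neg (show ¬(b = a) from fun h => hab h.symm), if_pos rfl, hrdef]
        field_simp
        ring
      · intro x _ hx
        simp only [Finset.mem_insert, Finset.mem_singleton, not_or] at hx
        rw [if_neg hx.1, if_neg hx.2]
    rw [hrest, add_zero]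

/-- The "prefix factor". -/
noncomputable def prefC (s : α → ℝ) : List α → ℝ → ℝ
  | [], _ => 1
  | d :: t, w => Real.exp (s d) / w * prefC s t (w - Real.exp (s d))

lemma plProb_append_s6 (s : α → ℝ) (p : List α) : ∀ q : List α,
    plProb s (p ++ q) = prefC s p (((p ++ q).map fun k => Real.exp (s k)).sum) * plProb s q := by
  induction p with
  | nil => intro q; simp [prefC]
  | cons d t ihp =>
    intro q
    rw [List.cons_append]
    show Real.exp (s d) / (((d :: (t ++ q)).map fun k => Real.exp (s k)).sum) * plProb s (t ++ q)
      = _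
    rw [ihp q, prefC]
    rw [show (((d :: (t ++ q)).map fun k => Real.exp (s k)).sum) - Real.exp (s d)
        = (((t ++ q).map fun k => Real.exp (s k)).sum) by simp]
    ring

end Aux

/-- For distinct `a, b ∈ S` and a prefix `p` of distinct elements of
`S \ {a, b}` with positive probability, the conditional probability (given that
the first `k` entries are `p`) that `a` appears before `b` equals
`exp (s a) / (exp (s a) + exp (s b))`: the relative order of `a` and `b` is
independent of how the first `k` positions are arranged. -/
theorem pl_pairwise_cond {α : Type*} [DecidableEq α] (S : Finset α) (s : α → ℝ)
    (a b : α) (ha : a ∈ S) (hb : b ∈ S) (hab : a ≠ b)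
    (p : List α) (hp : p.Nodup) (hpS : ∀ x ∈ p, x ∈ S)
    (hpa : a ∉ p) (hpb : b ∉ p)
    (hpos : 0 < plPr s S {l | l.take p.length = p}) :
    plPr s S {l | l.take p.length = p ∧ l.idxOf a < l.idxOf b} /
        plPr s S {l | l.take p.length = p}
      = Real.exp (s a) / (Real.exp (s a) + Real.exp (s b)) := by
  classical
  set T : Finset α := S \ p.toFinset with hTdef
  have hpsub : p.toFinset ⊆ S := by
    intro x hx
    exact hpS x (List.mem_toFinset.1 hx)
  have haT : a ∈ T := Finset.mem_sdiff.2 ⟨ha, fun h => hpa (List.mem_toFinset.1 h)⟩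
  have hbT : b ∈ T := Finset.mem_sdiff.2 ⟨hb, fun h => hpb (List.mem_toFinset.1 h)⟩
  -- the appended lists are exactly the permutations of S with prefix p
  have happerm : ∀ q : List α, q.Perm T.toList → (p ++ q).Perm S.toList := by
    intro q hq
    apply List.perm_of_nodup_nodup_toFinset_eq _ S.nodup_toList
    · rw [List.toFinset_append, Finset.toList_toFinset]
      have : q.toFinset = T := by
        rw [List.toFinset_eq_of_perm _ _ hq, Finset.toList_toFinset]
      rw [this, hTdef, Finset.union_sdiff_of_subset hpsub]
    · rw [List.nodup_append]
      refine ⟨hp, hq.nodup_iff.2 (Finset.nodup_toList T), ?_⟩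
      intro x hxp y hxq hxy
      subst hxy
      have : x ∈ T := by
        rw [← Finset.mem_toList]; exact hq.subset hxq
      exact (Finset.mem_sdiff.1 this).2 (List.mem_toFinset.2 hxp)
  have hfilt : (permsOf S).filter (fun l => l.take p.length = p)
      = (permsOf T).image (fun q => p ++ q) := by
    ext l
    simp only [Finset.mem_filter, Finset.mem_image, mem_permsOf]
    constructor
    · rintro ⟨hl, htake⟩
      have hlform : l = p ++ l.drop p.length := by
        conv_lhs => rw [← List.take_append_drop p.length l]
        rw [htake]
      refine ⟨l.drop p.length, ?_, hlform.symm⟩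
      have hnd : l.Nodup := hl.nodup_iff.2 S.nodup_toList
      rw [hlform, List.nodup_append] at hnd
      apply List.perm_of_nodup_nodup_toFinset_eq hnd.2.1 (Finset.nodup_toList T)
      rw [Finset.toList_toFinset]
      ext x
      simp only [List.mem_toFinset, hTdef, Finset.mem_sdiff, List.mem_toFinset]
      constructor
      · intro hx
        refine ⟨?_, fun hxp => hnd.2.2 x hxp x hx rfl⟩
        rw [← Finset.mem_toList]
        exact hl.subset (hlform ▸ List.mem_append_right p hx)
      · rintro ⟨hxS, hxp⟩
        have : x ∈ l := hl.symm.subset (Finset.mem_toList.2 hxS)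
        rw [hlform, List.mem_append] at this
        tauto
    · rintro ⟨q, hq, rfl⟩
      exact ⟨happerm q hq, List.take_left⟩
  -- constant prefix factor
  set W : ℝ := ∑ x ∈ S, Real.exp (s x) with hWdef
  set C : ℝ := prefC s p W with hCdef
  have hplC : ∀ q ∈ permsOf T, plProb s (p ++ q) = C * plProb s q := by
    intro q hq
    rw [plProb_append_s6, list_map_sum_perm _ (happerm q (mem_permsOf.1 hq))]
  have hmain : ∀ (P : List α → Prop) (_ : DecidablePred P),
      plPr s S {l | l.take p.length = p ∧ P l}
        = C * ∑ q ∈ permsOf T, (if P (p ++ q) then plProb s q else 0) := by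
    intro P hPd
    have : ∀ l ∈ permsOf S, ({l | l.take p.length = p ∧ P l} : Set (List α)).indicator
        (plProb s) l = if l.take p.length = p then (if P l then plProb s l else 0) else 0 := by
      intro l _
      rw [Set.indicator_apply]
      by_cases h1 : l.take p.length = p <;> by_cases h2 : P l <;>
        simp [Set.mem_setOf_eq, h1, h2]
    rw [plPr_eq]
    rw [Finset.sum_congr rfl this, ← Finset.sum_filter, hfilt, Finset.sum_image]
    · rw [Finset.mul_sum, Finset.sum_congr rfl]
      intro q hq
      by_cases h : P (p ++ q)
      · rw [if_pos h, if_pos h, hplC q hq]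
      · rw [if_neg h, if_neg h, mul_zero]
    · intro x _ y _ h
      exact List.append_cancel_left h
  have hden : plPr s S {l | l.take p.length = p} = C := by
    have : ({l : List α | l.take p.length = p} : Set (List α))
        = {l | l.take p.length = p ∧ True} := by
      ext l; simp
    rw [this, hmain (fun _ => True) (fun _ => inferInstance)]
    simp only [if_true]
    rw [sum_plProb, mul_one]
  have hnum : plPr s S {l | l.take p.length = p ∧ l.idxOf a < l.idxOf b}
      = C * (Real.exp (s a) / (Real.exp (s a) + Real.exp (s b))) := by
    rw [hmain (fun l => l.idxOf a < l.idxOf b) (fun _ => inferInstance)]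
    congr 1
    have : ∀ q ∈ permsOf T,
        (if (p ++ q).idxOf a < (p ++ q).idxOf b then plProb s q else 0)
        = (if q.idxOf a < q.idxOf b then plProb s q else 0) := by
      intro q _
      rw [List.idxOf_append_of_notMem hpa, List.idxOf_append_of_notMem hpb]
      by_cases h : q.idxOf a < q.idxOf b
      · rw [if_pos (by omega), if_pos h]
      · rw [if_neg (by omega), if_neg h]
    rw [Finset.sum_congr rfl this, sum_plProb_before s T haT hbT hab]
  have hC : C ≠ 0 := by
    rw [hden] at hpos; exact hpos.ne'
  rw [hnum, hden]
  exact mul_div_cancel_left₀ _ hC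
end
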